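/- arXiv:1609.00660 — 2 statements merged into one kernel-verified Lean document; each statement's English description precedes it below -/
import Mathlib

section
/- Let H₀ be a self-adjoint operator with orthonormal eigenbasis {eₙ} (H₀ eₙ = λₙ eₙ), H a closed operator, and T a bounded invertible operator with T H₀ eₙ = H T eₙ for all n. If the linear span of {T eₙ} is a core for H, then H is similar to H₀ with intertwining operator T, i.e., T D(H₀) = D(H) and H T f = T H₀ f for all f ∈ D(H₀). -/
open Filter Topology
open scoped InnerProductSpace

/-- `C` is a core for the (closed) operator with domain `D` and action `A`. -/
def IsCore {H : Type*} [NormedAddCommGroup H] [InnerProductSpace ℂ H]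
    (D : Set H) (A : H →ₗ[ℂ] H) (C : Set H) : Prop :=
  C ⊆ D ∧ ∀ f ∈ D, ∃ g : ℕ → H, (∀ n, g n ∈ C) ∧
    Tendsto g atTop (nhds f) ∧ Tendsto (fun n => A (g n)) atTop (nhds (A f))

/-- The operator with domain `D` and action `A` is closed (sequential formulation). -/
def IsClosedOp {H : Type*} [NormedAddCommGroup H] [InnerProductSpace ℂ H]
    (D : Set H) (A : H →ₗ[ℂ] H) : Prop :=
  ∀ (g : ℕ → H) (f y : H), (∀ n, g n ∈ D) → Tendsto g atTop (nhds f) →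
    Tendsto (fun n => A (g n)) atTop (nhds y) → f ∈ D ∧ A f = y

/-- If `span {T eₙ}` is a core for the closed operator `H`, then `H` is similar to
the self-adjoint operator `H₀` with intertwining operator `T`:
`T D(H₀) = D(H)` and `H T f = T H₀ f` on `D(H₀)`. -/
theorem stmt1 {H : Type*} [NormedAddCommGroup H] [InnerProductSpace ℂ H] [CompleteSpace H]
    (e : HilbertBasis ℕ ℂ H) (lam : ℕ → ℝ)
    (D₀ DH : Set H) (A₀ A : H →ₗ[ℂ] H)
    -- H₀ self-adjoint, described concretely by its eigen-decomposition
    (hD₀ : D₀ = {f : H | Summable fun k => |lam k| ^ 2 * ‖⟪e k, f⟫_ℂ‖ ^ 2})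
    (hA₀coef : ∀ f ∈ D₀, ∀ k, ⟪e k, A₀ f⟫_ℂ = (lam k : ℂ) * ⟪e k, f⟫_ℂ)
    (hEig : ∀ n, A₀ (e n) = (lam n : ℂ) • e n)
    -- H closed
    (hHclosed : IsClosedOp DH A)
    -- T bounded with bounded inverse
    (T Tinv : H →L[ℂ] H) (hTl : ∀ x, Tinv (T x) = x) (hTr : ∀ x, T (Tinv x) = x)
    -- T H₀ eₙ = H T eₙ
    (hIntBasis : ∀ n, T (e n) ∈ DH ∧ A (T (e n)) = T (A₀ (e n)))
    -- span {T eₙ} is a core for H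
    (hCore : IsCore DH A (Submodule.span ℂ (Set.range fun n => T (e n)) : Submodule ℂ H)) :
    T '' D₀ = DH ∧ ∀ f ∈ D₀, T f ∈ DH ∧ A (T f) = T (A₀ f) := by
  subst hD₀
  -- orthogonality helpers
  have hspan0 : ∀ x ∈ Submodule.span ℂ (Set.range ⇑e),
      ∃ s : Finset ℕ, ∀ k ∉ s, ⟪e k, x⟫_ℂ = 0 := by
    intro x hx
    induction hx using Submodule.span_induction with
    | mem y hy =>
      obtain ⟨n, rfl⟩ := hy
      exact ⟨{n}, fun k hk => e.orthonormal.2 (by simpa using hk)⟩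
    | zero => exact ⟨∅, fun k _ => inner_zero_right _⟩
    | add y z _ _ hy hz =>
      obtain ⟨s, hs⟩ := hy; obtain ⟨t, ht⟩ := hz
      refine ⟨s ∪ t, fun k hk => ?_⟩
      rw [inner_add_right, hs k (fun h => hk (Finset.mem_union_left _ h)),
        ht k (fun h => hk (Finset.mem_union_right _ h)), add_zero]
    | smul c y _ hy =>
      obtain ⟨s, hs⟩ := hy
      exact ⟨s, fun k hk => by rw [inner_smul_right, hs k hk, mul_zero]⟩
  have hD₀span : ∀ x ∈ Submodule.span ℂ (Set.range ⇑e),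
      x ∈ {f : H | Summable fun k => |lam k| ^ 2 * ‖⟪e k, f⟫_ℂ‖ ^ 2} := by
    intro x hx
    obtain ⟨s, hs⟩ := hspan0 x hx
    refine summable_of_ne_finset_zero (s := s) fun k hk => ?_
    simp [hs k hk]
  have hcoefspan : ∀ x ∈ Submodule.span ℂ (Set.range ⇑e),
      ∀ k, ⟪e k, A₀ x⟫_ℂ = (lam k : ℂ) * ⟪e k, x⟫_ℂ := by
    intro x hx
    induction hx using Submodule.span_induction with
    | mem y hy =>
      obtain ⟨n, rfl⟩ := hy
      intro k
      rw [hEig n, inner_smul_right]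
      rcases eq_or_ne k n with rfl | hkn
      · rfl
      · rw [e.orthonormal.2 hkn, mul_zero, mul_zero]
    | zero => intro k; simp
    | add y z _ _ hy hz =>
      intro k
      rw [map_add, inner_add_right, inner_add_right, hy k, hz k, mul_add]
    | smul c y _ hy =>
      intro k
      rw [map_smul, inner_smul_right, inner_smul_right, hy k]; ring
  have hTspan : ∀ x ∈ Submodule.span ℂ (Set.range ⇑e),
      T x ∈ (Submodule.span ℂ (Set.range fun n => T (e n)) : Submodule ℂ H) := by
    intro x hx
    induction hx using Submodule.span_induction with
    | mem y hy =>
      obtain ⟨n, rfl⟩ := hy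
      exact Submodule.subset_span ⟨n, rfl⟩
    | zero => simpa using Submodule.zero_mem _
    | add y z _ _ hy hz => rw [map_add]; exact Submodule.add_mem _ hy hz
    | smul c y _ hy => rw [map_smul]; exact Submodule.smul_mem _ c hy
  have hintspan : ∀ x ∈ Submodule.span ℂ (Set.range ⇑e), A (T x) = T (A₀ x) := by
    intro x hx
    induction hx using Submodule.span_induction with
    | mem y hy => obtain ⟨n, rfl⟩ := hy; exact (hIntBasis n).2
    | zero => simp
    | add y z _ _ hy hz => simp only [map_add, hy, hz]
    | smul c y _ hy => simp only [map_smul, hy]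
  -- part 1: forward inclusion / intertwining on D₀
  have key : ∀ f ∈ {f : H | Summable fun k => |lam k| ^ 2 * ‖⟪e k, f⟫_ℂ‖ ^ 2},
      T f ∈ DH ∧ A (T f) = T (A₀ f) := by
    intro f hf
    set g : ℕ → H := fun n => ∑ k ∈ Finset.range n, ⟪e k, f⟫_ℂ • e k with hg
    have hgspan : ∀ n, g n ∈ Submodule.span ℂ (Set.range ⇑e) := by
      intro n
      exact Submodule.sum_mem _ fun k _ => Submodule.smul_mem _ _ (Submodule.subset_span ⟨k, rfl⟩)
    have hgf : Tendsto g atTop (nhds f) := by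
      have := (e.hasSum_repr f).tendsto_sum_nat
      simpa [hg, e.repr_apply_apply] using this
    have hA₀g : ∀ n, A₀ (g n) = ∑ k ∈ Finset.range n, ⟪e k, A₀ f⟫_ℂ • e k := by
      intro n
      rw [hg]
      simp only [map_sum, map_smul, hEig]
      refine Finset.sum_congr rfl fun k _ => ?_
      rw [hA₀coef f hf k, smul_smul, mul_comm]
    have hA₀gf : Tendsto (fun n => A₀ (g n)) atTop (nhds (A₀ f)) := by
      have := (e.hasSum_repr (A₀ f)).tendsto_sum_nat
      simp only [e.repr_apply_apply] at this
      simpa only [hA₀g] using this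
    have hTg : Tendsto (fun n => T (g n)) atTop (nhds (T f)) :=
      (T.continuous.tendsto _).comp hgf
    have hATg : Tendsto (fun n => A (T (g n))) atTop (nhds (T (A₀ f))) := by
      have : Tendsto (fun n => T (A₀ (g n))) atTop (nhds (T (A₀ f))) :=
        (T.continuous.tendsto _).comp hA₀gf
      refine this.congr fun n => (hintspan _ (hgspan n)).symm
    exact hHclosed (fun n => T (g n)) (T f) (T (A₀ f))
      (fun n => hCore.1 (hTspan _ (hgspan n))) hTg hATg
  refine ⟨?_, key⟩
  have hTinvspan : ∀ y ∈ (Submodule.span ℂ (Set.range fun n => T (e n)) : Submodule ℂ H),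
      Tinv y ∈ Submodule.span ℂ (Set.range ⇑e) := by
    intro y hy
    induction hy using Submodule.span_induction with
    | mem z hz => obtain ⟨m, rfl⟩ := hz; rw [hTl]; exact Submodule.subset_span ⟨m, rfl⟩
    | zero => simpa using Submodule.zero_mem _
    | add y z _ _ hy hz => rw [map_add]; exact Submodule.add_mem _ hy hz
    | smul c y _ hy => rw [map_smul]; exact Submodule.smul_mem _ c hy
  apply Set.Subset.antisymm
  · rintro _ ⟨f, hf, rfl⟩; exact (key f hf).1
  · intro u hu
    obtain ⟨g, hgmem, hgu, hAgu⟩ := hCore.2 u hu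
    set h : ℕ → H := fun n => Tinv (g n) with hh
    have hhspan : ∀ n, h n ∈ Submodule.span ℂ (Set.range ⇑e) := fun n =>
      hTinvspan _ (hgmem n)
    have hTh : ∀ n, T (h n) = g n := fun n => hTr _
    have hhf : Tendsto h atTop (nhds (Tinv u)) := (Tinv.continuous.tendsto _).comp hgu
    have hA₀h : ∀ n, A₀ (h n) = Tinv (A (g n)) := by
      intro n
      rw [← hTh n, hintspan _ (hhspan n), hTl]
    have hA₀hy : Tendsto (fun n => A₀ (h n)) atTop (nhds (Tinv (A u))) := by
      have : Tendsto (fun n => Tinv (A (g n))) atTop (nhds (Tinv (A u))) :=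
        (Tinv.continuous.tendsto _).comp hAgu
      exact this.congr fun n => (hA₀h n).symm
    have hcoef : ∀ k, (lam k : ℂ) * ⟪e k, Tinv u⟫_ℂ = ⟪e k, Tinv (A u)⟫_ℂ := by
      intro k
      have h1 : Tendsto (fun n => ⟪e k, A₀ (h n)⟫_ℂ) atTop (nhds ⟪e k, Tinv (A u)⟫_ℂ) :=
        (Tendsto.inner tendsto_const_nhds hA₀hy)
      have h2 : Tendsto (fun n => (lam k : ℂ) * ⟪e k, h n⟫_ℂ) atTop
          (nhds ((lam k : ℂ) * ⟪e k, Tinv u⟫_ℂ)) :=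
        (Tendsto.inner tendsto_const_nhds hhf).const_mul _
      refine tendsto_nhds_unique (h2.congr fun n => ?_) h1
      exact (hcoefspan _ (hhspan n) k).symm
    have hmem : Tinv u ∈ {f : H | Summable fun k => |lam k| ^ 2 * ‖⟪e k, f⟫_ℂ‖ ^ 2} := by
      have hsum : Summable fun k => ‖⟪e k, Tinv (A u)⟫_ℂ‖ ^ 2 := by
        have h0 := (lp.memℓp (e.repr (Tinv (A u)))).summable (p := 2) (by norm_num)
        refine Summable.congr h0 fun k => ?_
        rw [e.repr_apply_apply,
          show ((2 : ENNReal)).toReal = ((2 : ℕ) : ℝ) by norm_num, Real.rpow_natCast]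
      refine hsum.congr fun k => ?_
      rw [← hcoef k, norm_mul, mul_pow, Complex.norm_real, Real.norm_eq_abs]
    exact ⟨Tinv u, hmem, hTr u⟩
end

section
/- Let {φₙ}, {ψₙ} be well-behaved biorthogonal sequences (Σ e^{−βn}‖φₙ‖² < ∞, Σ e^{−βn}‖ψₙ‖² < ∞, ⟨φₙ,ψₘ⟩ = δ_{nm}). Then for every X ∈ B(ℋ) the series Σₙ e^{−βn} ⟨φₙ, X ψₙ⟩ converges absolutely, and with Z₀ = Σₙ e^{−βn} = (1−e^{−β})⁻¹, the functional ω_{φψ}(X) = Z₀⁻¹ Σₙ e^{−βn}⟨φₙ, X ψₙ⟩ satisfies |ω_{φψ}(X)| ≤ Z₀⁻¹ ‖X‖ (Σₙ e^{−βn}‖φₙ‖²)^{1/2} (Σₙ e^{−βn}‖ψₙ‖²)^{1/2} and ω_{φψ}(1) = 1. -/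
open scoped InnerProductSpace

/-- The mixed Gibbs functional `ω_{φψ}(X) = Z₀⁻¹ Σₙ e^{−βn} ⟨φₙ, X ψₙ⟩`,
with `Z₀ = Σₙ e^{−βn} = (1 − e^{−β})⁻¹`. -/
noncomputable def omegaPhiPsi {H : Type*} [NormedAddCommGroup H] [InnerProductSpace ℂ H]
    (β : ℝ) (φ ψ : ℕ → H) (X : H →L[ℂ] H) : ℂ :=
  (((1 - Real.exp (-β))⁻¹ : ℝ) : ℂ)⁻¹ *
    ∑' n : ℕ, ((Real.exp (-β * n) : ℝ) : ℂ) * ⟪φ n, X (ψ n)⟫_ℂ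

/-- For well-behaved biorthogonal sequences, `ω_{φψ}` is well defined (absolutely
convergent series), bounded by the stated constant, and normalized. -/
theorem stmt14 {H : Type*} [NormedAddCommGroup H] [InnerProductSpace ℂ H] [CompleteSpace H]
    (β : ℝ) (hβ : 0 < β) (φ ψ : ℕ → H)
    (hφ : Summable fun n : ℕ => Real.exp (-β * n) * ‖φ n‖ ^ 2)
    (hψ : Summable fun n : ℕ => Real.exp (-β * n) * ‖ψ n‖ ^ 2)
    (hbi : ∀ n m, ⟪φ n, ψ m⟫_ℂ = if n = m then 1 else 0) :
    (∀ X : H →L[ℂ] H, Summable fun n : ℕ => Real.exp (-β * n) * ‖⟪φ n, X (ψ n)⟫_ℂ‖) ∧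
    (∀ X : H →L[ℂ] H, ‖omegaPhiPsi β φ ψ X‖ ≤
      (1 - Real.exp (-β)) * ‖X‖ *
        Real.sqrt (∑' n : ℕ, Real.exp (-β * n) * ‖φ n‖ ^ 2) *
        Real.sqrt (∑' n : ℕ, Real.exp (-β * n) * ‖ψ n‖ ^ 2)) ∧
    omegaPhiPsi β φ ψ 1 = 1 := by
  have he : ∀ n : ℕ, (0:ℝ) ≤ Real.exp (-β * n) := fun n => (Real.exp_pos _).le
  have hlt : Real.exp (-β) < 1 := by
    rw [Real.exp_lt_one_iff]; linarith
  have hZ : (0:ℝ) < 1 - Real.exp (-β) := by linarith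
  -- pointwise bound
  have hbound : ∀ (X : H →L[ℂ] H) (n : ℕ),
      Real.exp (-β * n) * ‖⟪φ n, X (ψ n)⟫_ℂ‖ ≤
        ‖X‖ * (Real.sqrt (Real.exp (-β * n)) * ‖φ n‖) *
          (Real.sqrt (Real.exp (-β * n)) * ‖ψ n‖) := by
    intro X n
    have h1 : ‖⟪φ n, X (ψ n)⟫_ℂ‖ ≤ ‖φ n‖ * (‖X‖ * ‖ψ n‖) :=
      (norm_inner_le_norm _ _).trans (by
        gcongr; exact X.le_opNorm _)
    calc Real.exp (-β * n) * ‖⟪φ n, X (ψ n)⟫_ℂ‖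
        ≤ Real.exp (-β * n) * (‖φ n‖ * (‖X‖ * ‖ψ n‖)) := by
          apply mul_le_mul_of_nonneg_left h1 (he n)
      _ = ‖X‖ * (Real.sqrt (Real.exp (-β * n)) * ‖φ n‖) *
          (Real.sqrt (Real.exp (-β * n)) * ‖ψ n‖) := by
          have hss := Real.mul_self_sqrt (he n)
          linear_combination (-(‖φ n‖ * (‖X‖ * ‖ψ n‖))) * hss
  -- summability
  have hsum : ∀ X : H →L[ℂ] H,
      Summable fun n : ℕ => Real.exp (-β * n) * ‖⟪φ n, X (ψ n)⟫_ℂ‖ := by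
    intro X
    apply Summable.of_nonneg_of_le
      (fun n => mul_nonneg (he n) (norm_nonneg _))
      (fun n => (hbound X n).trans ?_)
      (((hφ.add hψ).mul_left (‖X‖ / 2)))
    · have hab : ∀ a b : ℝ, a * b ≤ (a ^ 2 + b ^ 2) / 2 := by
        intro a b; nlinarith [sq_nonneg (a - b)]
      have := hab (Real.sqrt (Real.exp (-β * n)) * ‖φ n‖)
        (Real.sqrt (Real.exp (-β * n)) * ‖ψ n‖)
      have hsq : ∀ v : H, (Real.sqrt (Real.exp (-β * n)) * ‖v‖) ^ 2
          = Real.exp (-β * n) * ‖v‖ ^ 2 := by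
        intro v; rw [mul_pow, Real.sq_sqrt (he n)]
      rw [mul_assoc]
      calc ‖X‖ * ((Real.sqrt (Real.exp (-β * n)) * ‖φ n‖) *
              (Real.sqrt (Real.exp (-β * n)) * ‖ψ n‖))
          ≤ ‖X‖ * (((Real.sqrt (Real.exp (-β * n)) * ‖φ n‖) ^ 2
              + (Real.sqrt (Real.exp (-β * n)) * ‖ψ n‖) ^ 2) / 2) := by
            exact mul_le_mul_of_nonneg_left this (norm_nonneg X)
        _ = ‖X‖ / 2 * (Real.exp (-β * n) * ‖φ n‖ ^ 2
              + Real.exp (-β * n) * ‖ψ n‖ ^ 2) := by rw [hsq, hsq]; ring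
  refine ⟨hsum, ?_, ?_⟩
  · -- the bound
    intro X
    have hAn : (0:ℝ) ≤ ∑' n : ℕ, Real.exp (-β * n) * ‖φ n‖ ^ 2 :=
      tsum_nonneg fun n => by positivity
    have hBn : (0:ℝ) ≤ ∑' n : ℕ, Real.exp (-β * n) * ‖ψ n‖ ^ 2 :=
      tsum_nonneg fun n => by positivity
    have hnormcoef :
        ‖((((1 - Real.exp (-β))⁻¹ : ℝ) : ℂ))⁻¹‖ = 1 - Real.exp (-β) := by
      rw [norm_inv, Complex.norm_real, Real.norm_eq_abs, abs_inv,
        abs_of_pos hZ, inv_inv]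
    have hts : ‖∑' n : ℕ, ((Real.exp (-β * n) : ℝ) : ℂ) * ⟪φ n, X (ψ n)⟫_ℂ‖
        ≤ ∑' n : ℕ, Real.exp (-β * n) * ‖⟪φ n, X (ψ n)⟫_ℂ‖ := by
      have : ∀ n : ℕ, ‖((Real.exp (-β * n) : ℝ) : ℂ) * ⟪φ n, X (ψ n)⟫_ℂ‖
          = Real.exp (-β * n) * ‖⟪φ n, X (ψ n)⟫_ℂ‖ := by
        intro n
        rw [norm_mul, Complex.norm_real, Real.norm_eq_abs, abs_of_nonneg (he n)]
      calc ‖∑' n : ℕ, ((Real.exp (-β * n) : ℝ) : ℂ) * ⟪φ n, X (ψ n)⟫_ℂ‖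
          ≤ ∑' n : ℕ, ‖((Real.exp (-β * n) : ℝ) : ℂ) * ⟪φ n, X (ψ n)⟫_ℂ‖ :=
            norm_tsum_le_tsum_norm (by simpa only [this] using hsum X)
        _ = _ := by simp only [this]
    have hCS : (∑' n : ℕ, Real.exp (-β * n) * ‖⟪φ n, X (ψ n)⟫_ℂ‖)
        ≤ ‖X‖ * Real.sqrt (∑' n : ℕ, Real.exp (-β * n) * ‖φ n‖ ^ 2) *
            Real.sqrt (∑' n : ℕ, Real.exp (-β * n) * ‖ψ n‖ ^ 2) := by
      apply Summable.tsum_le_of_sum_le (hsum X)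
      intro s
      have h1 : ∑ n ∈ s, Real.exp (-β * n) * ‖⟪φ n, X (ψ n)⟫_ℂ‖
          ≤ ‖X‖ * ∑ n ∈ s, (Real.sqrt (Real.exp (-β * n)) * ‖φ n‖) *
              (Real.sqrt (Real.exp (-β * n)) * ‖ψ n‖) := by
        rw [Finset.mul_sum]
        apply Finset.sum_le_sum
        intro n _
        simpa [mul_assoc] using hbound X n
      have h2 : ∑ n ∈ s, (Real.sqrt (Real.exp (-β * n)) * ‖φ n‖) *
              (Real.sqrt (Real.exp (-β * n)) * ‖ψ n‖)
          ≤ Real.sqrt (∑ n ∈ s, Real.exp (-β * n) * ‖φ n‖ ^ 2) *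
              Real.sqrt (∑ n ∈ s, Real.exp (-β * n) * ‖ψ n‖ ^ 2) := by
        have := Real.sum_mul_le_sqrt_mul_sqrt s
          (fun n => Real.sqrt (Real.exp (-β * n)) * ‖φ n‖)
          (fun n => Real.sqrt (Real.exp (-β * n)) * ‖ψ n‖)
        simpa only [mul_pow, Real.sq_sqrt (Real.exp_nonneg _)] using this
      have h3 : Real.sqrt (∑ n ∈ s, Real.exp (-β * n) * ‖φ n‖ ^ 2)
          ≤ Real.sqrt (∑' n : ℕ, Real.exp (-β * n) * ‖φ n‖ ^ 2) :=
        Real.sqrt_le_sqrt (Summable.sum_le_tsum s (fun n _ => by positivity) hφ)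
      have h4 : Real.sqrt (∑ n ∈ s, Real.exp (-β * n) * ‖ψ n‖ ^ 2)
          ≤ Real.sqrt (∑' n : ℕ, Real.exp (-β * n) * ‖ψ n‖ ^ 2) :=
        Real.sqrt_le_sqrt (Summable.sum_le_tsum s (fun n _ => by positivity) hψ)
      calc ∑ n ∈ s, Real.exp (-β * n) * ‖⟪φ n, X (ψ n)⟫_ℂ‖
          ≤ ‖X‖ * (Real.sqrt (∑ n ∈ s, Real.exp (-β * n) * ‖φ n‖ ^ 2) *
              Real.sqrt (∑ n ∈ s, Real.exp (-β * n) * ‖ψ n‖ ^ 2)) :=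
            h1.trans (mul_le_mul_of_nonneg_left h2 (norm_nonneg X))
        _ ≤ ‖X‖ * Real.sqrt (∑' n : ℕ, Real.exp (-β * n) * ‖φ n‖ ^ 2) *
              Real.sqrt (∑' n : ℕ, Real.exp (-β * n) * ‖ψ n‖ ^ 2) := by
            rw [mul_assoc]
            apply mul_le_mul_of_nonneg_left _ (norm_nonneg X)
            exact mul_le_mul h3 h4 (Real.sqrt_nonneg _) (Real.sqrt_nonneg _)
    rw [omegaPhiPsi, norm_mul, hnormcoef]
    calc (1 - Real.exp (-β)) *
          ‖∑' n : ℕ, ((Real.exp (-β * n) : ℝ) : ℂ) * ⟪φ n, X (ψ n)⟫_ℂ‖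
        ≤ (1 - Real.exp (-β)) * (‖X‖ *
            Real.sqrt (∑' n : ℕ, Real.exp (-β * n) * ‖φ n‖ ^ 2) *
            Real.sqrt (∑' n : ℕ, Real.exp (-β * n) * ‖ψ n‖ ^ 2)) :=
          mul_le_mul_of_nonneg_left (hts.trans hCS) hZ.le
      _ = _ := by ring
  · -- normalization
    have h1 : ∀ n : ℕ, ⟪φ n, (1 : H →L[ℂ] H) (ψ n)⟫_ℂ = 1 := by
      intro n; simpa using hbi n n
    have hgeo : (∑' n : ℕ, Real.exp (-β * n)) = (1 - Real.exp (-β))⁻¹ := by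
      have : ∀ n : ℕ, Real.exp (-β * n) = Real.exp (-β) ^ n := by
        intro n; rw [← Real.exp_nat_mul]; ring_nf
      rw [tsum_congr this, tsum_geometric_of_lt_one (Real.exp_pos _).le hlt]
    rw [omegaPhiPsi]
    have : (∑' n : ℕ, ((Real.exp (-β * n) : ℝ) : ℂ) * ⟪φ n, (1 : H →L[ℂ] H) (ψ n)⟫_ℂ)
        = (((1 - Real.exp (-β))⁻¹ : ℝ) : ℂ) := by
      simp only [h1, mul_one]
      rw [← Complex.ofReal_tsum, hgeo]
    rw [this, inv_mul_cancel₀]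
    simp only [ne_eq, Complex.ofReal_eq_zero, inv_eq_zero]
    exact hZ.ne'
end
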